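/- For all p, q ∈ ℕ, every ω = (ω_0, ω′) ∈ ℝ^{1+p+q} with Q_{1+p,q}(ω) = 1 and ω_0 ≠ −1, and all v, w ∈ ℝ^{1+p+q} tangent to the quadric S^{p,q} at ω (i.e. with B_{1+p,q}(ω, v) = B_{1+p,q}(ω, w) = 0): B_{p,q}((DΨ)_ω(v), (DΨ)_ω(w)) = (4/(1+ω_0)²) · B_{1+p,q}(v, w), where (DΨ)_ω is the Fréchet derivative at ω of the map Ψ defined on the open set {ω_0 ≠ −1} of ℝ^{1+p+q}. (Lemma 3.1: Ψ*g_{ℝ^{p,q}} = 4/(1+ω_0)² · g_{S^{p,q}}.) -/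

import Mathlib

open scoped BigOperators

noncomputable section

/-- The bilinear form of signature `(p, n-p)` on `ℝ^n`:
`B(z,z') = ∑_{i < p} z_i z'_i - ∑_{i ≥ p} z_i z'_i`.  For `n = p + q` this is
`B_{p,q}`, and for `n = 1 + p + q` with first parameter `p + 1` it is `B_{1+p,q}`. -/
def Bsgn {n : ℕ} (p : ℕ) (z z' : Fin n → ℝ) : ℝ :=
  ∑ i : Fin n, (if (i : ℕ) < p then (1 : ℝ) else -1) * z i * z' i

/-- The quadratic form `Q(z) = B(z,z)`. -/
def Qsgn {n : ℕ} (p : ℕ) (z : Fin n → ℝ) : ℝ := Bsgn p z z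

/-- The stereographic-type map `Φ(z) = (4 - Q(z), 4z)/(Q(z)+4)` from
`(ℝ^{p,q})' = {Q_{p,q} ≠ -4}` to the space form `S^{p,q} ⊂ ℝ^{1+p+q}`. -/
def PhiMap (p q : ℕ) (z : Fin (p + q) → ℝ) : Fin (p + q + 1) → ℝ :=
  fun i => (Qsgn p z + 4)⁻¹ *
    (Fin.cons (4 - Qsgn p z) (fun j => 4 * z j) : Fin (p + q + 1) → ℝ) i

/-- The inverse map `Ψ(ω₀, ω') = (2/(1+ω₀)) ω'`. -/
def PsiMap (p q : ℕ) (ω : Fin (p + q + 1) → ℝ) : Fin (p + q) → ℝ :=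
  fun i => (2 / (1 + ω 0)) * ω i.succ

/-!
Writing `ω = (ω₀, ω')` and `c = 1 + ω₀`, the differential of `Ψ` is
`DΨ_ω(v) = (2/c) v' - (2 v₀/c²) ω'`. Expanding `B_{p,q}(DΨ v, DΨ w)` bilinearly and using
`B_{1+p,q}(x, y) = x₀ y₀ + B_{p,q}(x', y')`, the tangency conditions give
`B_{p,q}(ω', v') = -ω₀ v₀`, `B_{p,q}(ω', w') = -ω₀ w₀` and `Q_{p,q}(ω') = 1 - ω₀²`, after which
the coefficient of `v₀ w₀` is `(2 ω₀ c + 1 - ω₀²)/c² = 1`.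
-/

section Bsgn

variable {n : ℕ} (p : ℕ)

theorem Bsgn_comm (x y : Fin n → ℝ) : Bsgn p x y = Bsgn p y x := by
  simp only [Bsgn, mul_right_comm _ (x _)]

theorem Bsgn_sub_left (x y z : Fin n → ℝ) : Bsgn p (x - y) z = Bsgn p x z - Bsgn p y z := by
  simp only [Bsgn, ← Finset.sum_sub_distrib, Pi.sub_apply]
  exact Finset.sum_congr rfl fun _ _ => by ring

theorem Bsgn_smul_left (a : ℝ) (x y : Fin n → ℝ) : Bsgn p (a • x) y = a * Bsgn p x y := by
  simp only [Bsgn, Finset.mul_sum, Pi.smul_apply, smul_eq_mul]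
  exact Finset.sum_congr rfl fun _ _ => by ring

theorem Bsgn_sub_right (x y z : Fin n → ℝ) : Bsgn p x (y - z) = Bsgn p x y - Bsgn p x z := by
  simp only [Bsgn_comm p x, Bsgn_sub_left]

theorem Bsgn_smul_right (a : ℝ) (x y : Fin n → ℝ) : Bsgn p x (a • y) = a * Bsgn p x y := by
  rw [Bsgn_comm, Bsgn_smul_left, Bsgn_comm]

theorem Bsgn_succ (x y : Fin (n + 1) → ℝ) :
    Bsgn (p + 1) x y = x 0 * y 0 + Bsgn p (Fin.tail x) (Fin.tail y) := by
  simp [Bsgn, Fin.sum_univ_succ, Fin.tail]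

end Bsgn

theorem hasFDerivAt_finTail {𝕜 : Type*} [NontriviallyNormedField 𝕜] {n : ℕ}
    (x : Fin (n + 1) → 𝕜) :
    HasFDerivAt (Fin.tail : (Fin (n + 1) → 𝕜) → Fin n → 𝕜)
      (ContinuousLinearMap.pi fun i : Fin n =>
        ContinuousLinearMap.proj (R := 𝕜) (φ := fun _ : Fin (n + 1) => 𝕜) i.succ) x :=
  (ContinuousLinearMap.pi fun i : Fin n =>
    ContinuousLinearMap.proj (R := 𝕜) (φ := fun _ : Fin (n + 1) => 𝕜) i.succ).hasFDerivAt

theorem fderiv_PsiMap_apply (p q : ℕ) (ω : Fin (p + q + 1) → ℝ) (hω0 : ω 0 ≠ -1)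
    (u : Fin (p + q + 1) → ℝ) :
    fderiv ℝ (PsiMap p q) ω u
      = (2 / (1 + ω 0)) • Fin.tail u - (2 * u 0 / (1 + ω 0) ^ 2) • Fin.tail ω := by
  have hc : 1 + ω 0 ≠ 0 := fun h => hω0 (by linarith)
  have hcoef : HasDerivAt (fun t : ℝ => 2 / (1 + t)) _ (ω 0) :=
    HasDerivAt.fun_div (hasDerivAt_const _ 2) (HasDerivAt.const_add 1 (hasDerivAt_id' _)) hc
  have hPsi : HasFDerivAt (PsiMap p q) _ ω :=
    (hcoef.comp_hasFDerivAt ω (hasFDerivAt_apply 0 ω)).smul (hasFDerivAt_finTail ω)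
  rw [hPsi.fderiv]
  ext i
  simp only [Function.comp_apply, add_apply, smul_apply,
    ContinuousLinearMap.coe_pi', ContinuousLinearMap.proj_apply,
    ContinuousLinearMap.smulRight_apply, smul_eq_mul, Pi.add_apply, Pi.smul_apply, Pi.sub_apply,
    Fin.tail]
  ring

theorem stmt14 (p q : ℕ) (ω : Fin (p + q + 1) → ℝ) (hω : Qsgn (p + 1) ω = 1)
    (hω0 : ω 0 ≠ -1) (v w : Fin (p + q + 1) → ℝ)
    (hv : Bsgn (p + 1) ω v = 0) (hw : Bsgn (p + 1) ω w = 0) :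
    Bsgn p (fderiv ℝ (PsiMap p q) ω v) (fderiv ℝ (PsiMap p q) ω w)
      = (4 / (1 + ω 0) ^ 2) * Bsgn (p + 1) v w := by
  have hc : 1 + ω 0 ≠ 0 := fun h => hω0 (by linarith)
  rw [Qsgn, Bsgn_succ] at hω
  rw [Bsgn_succ] at hv hw ⊢
  have hωv : Bsgn p (Fin.tail ω) (Fin.tail v) = -(ω 0 * v 0) := by linarith
  have hωw : Bsgn p (Fin.tail ω) (Fin.tail w) = -(ω 0 * w 0) := by linarith
  have hωω : Bsgn p (Fin.tail ω) (Fin.tail ω) = 1 - ω 0 * ω 0 := by linarith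
  rw [fderiv_PsiMap_apply p q ω hω0, fderiv_PsiMap_apply p q ω hω0]
  simp only [Bsgn_sub_left, Bsgn_sub_right, Bsgn_smul_left, Bsgn_smul_right,
    Bsgn_comm p (Fin.tail v) (Fin.tail ω), hωv, hωw, hωω]
  field_simp
  ring
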